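/- Under the stated smoothness assumptions on ξ, suppose additionally that ‖∇ξ(q)‖ is constant in q. Then ∇²ξ(q)∇ξ(q) = 0 for every q ∈ ℝ^d, and consequently, for any continuously differentiable a : ℝ → ℝ and κ > 0, the divergence of D(q) := κ(I_d + (a(ξ(q)) − 1)P(q)) simplifies to div D(q) = κ ( (a(ξ(q)) − 1) Δξ(q)/‖∇ξ(q)‖² + a'(ξ(q)) ) ∇ξ(q). -/

import Mathlib

open Matrix BigOperators

/-- Partial derivative `∂_j f (q)` of a scalar field on `ℝ^d`. -/
noncomputable def pdrv {d : ℕ} (j : Fin d) (f : (Fin d → ℝ) → ℝ) (q : Fin d → ℝ) : ℝ :=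
  fderiv ℝ f q (Pi.single j 1)

/-- Gradient `∇f(q)` of a scalar field on `ℝ^d`. -/
noncomputable def gradv {d : ℕ} (f : (Fin d → ℝ) → ℝ) (q : Fin d → ℝ) : Fin d → ℝ :=
  fun j => pdrv j f q

/-- Hessian matrix `∇²f(q)`, with entries `(i,j) ↦ ∂_j ∂_i f(q)`. -/
noncomputable def hessM {d : ℕ} (f : (Fin d → ℝ) → ℝ) (q : Fin d → ℝ) :
    Matrix (Fin d) (Fin d) ℝ :=
  Matrix.of fun i j => pdrv j (fun q' => pdrv i f q') q

/-- Laplacian `Δf(q)`. -/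
noncomputable def lapl {d : ℕ} (f : (Fin d → ℝ) → ℝ) (q : Fin d → ℝ) : ℝ :=
  ∑ i, hessM f q i i

/-- Divergence of a matrix field, `(div M)_i = ∑_j ∂_j M_{ij}`. -/
noncomputable def divMat {d : ℕ} (M : (Fin d → ℝ) → Matrix (Fin d) (Fin d) ℝ)
    (q : Fin d → ℝ) : Fin d → ℝ :=
  fun i => ∑ j, pdrv j (fun q' => M q' i j) q

/-- The projection field `P(q) = ∇ξ(q) ⊗ ∇ξ(q)/‖∇ξ(q)‖²`. -/
noncomputable def projP {d : ℕ} (ξ : (Fin d → ℝ) → ℝ) (q : Fin d → ℝ) :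
    Matrix (Fin d) (Fin d) ℝ :=
  Matrix.of fun i j => gradv ξ q i * gradv ξ q j / (∑ k, gradv ξ q k ^ 2)

/-! Differentiating the constant `‖∇ξ‖²` gives `2 ∇²ξ ∇ξ = 0`, by symmetry of the Hessian.
With `‖∇ξ‖² ≡ c` the projection is `P = c⁻¹ ∇ξ ⊗ ∇ξ`, so `D = κ (I + ψ ∇ξ ⊗ ∇ξ)` with
`ψ = (a ∘ ξ - 1) / c`, and the product rule gives
`(div D)_i = κ (∂_i ξ ∇ψ·∇ξ + ψ (∇²ξ ∇ξ)_i + ψ ∂_i ξ Δξ)`. The middle term vanishes and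
`∇ψ·∇ξ = a'(ξ) ‖∇ξ‖² / c = a'(ξ)`. -/

section PartialDerivative

variable {d : ℕ} {f g : (Fin d → ℝ) → ℝ} {q : Fin d → ℝ}

lemma pdrv_const (c : ℝ) (j : Fin d) : pdrv j (fun _ => c) q = 0 := by
  simp [pdrv]

lemma pdrv_const_mul (c : ℝ) (j : Fin d) : pdrv j (fun x => c * f x) q = c * pdrv j f q := by
  simp only [pdrv]
  rw [show (fun x => c * f x) = c • f from rfl, fderiv_const_smul_field]
  rfl

lemma pdrv_const_add (c : ℝ) (j : Fin d) : pdrv j (fun x => c + f x) q = pdrv j f q := by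
  simp only [pdrv, fderiv_const_add]

lemma pdrv_sub_const (c : ℝ) (j : Fin d) : pdrv j (fun x => f x - c) q = pdrv j f q := by
  simp only [pdrv, fderiv_sub_const]

lemma pdrv_div_const (c : ℝ) (j : Fin d) : pdrv j (fun x => f x / c) q = pdrv j f q / c := by
  simp only [div_eq_inv_mul, pdrv_const_mul]

lemma pdrv_mul (hf : DifferentiableAt ℝ f q) (hg : DifferentiableAt ℝ g q) (j : Fin d) :
    pdrv j (fun x => f x * g x) q = pdrv j f q * g q + f q * pdrv j g q := by
  simp only [pdrv, fderiv_fun_mul hf hg]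
  simp only [_root_.add_apply, _root_.smul_apply, smul_eq_mul]
  ring

lemma pdrv_sum {ι : Type*} (s : Finset ι) {F : ι → (Fin d → ℝ) → ℝ}
    (hF : ∀ k ∈ s, DifferentiableAt ℝ (F k) q) (j : Fin d) :
    pdrv j (fun x => ∑ k ∈ s, F k x) q = ∑ k ∈ s, pdrv j (F k) q := by
  simp [pdrv, fderiv_fun_sum hF]

lemma pdrv_comp {a : ℝ → ℝ} (ha : DifferentiableAt ℝ a (f q)) (hf : DifferentiableAt ℝ f q)
    (j : Fin d) : pdrv j (fun x => a (f x)) q = deriv a (f q) * pdrv j f q := by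
  simp only [pdrv]
  rw [show (fun x => a (f x)) = a ∘ f from rfl,
    (ha.hasDerivAt.comp_hasFDerivAt q hf.hasFDerivAt).fderiv]
  rfl

lemma contDiff_pdrv (hf : ContDiff ℝ 2 f) (i : Fin d) : ContDiff ℝ 1 (pdrv i f) :=
  (ContinuousLinearMap.apply ℝ ℝ (Pi.single i 1 : Fin d → ℝ)).contDiff.comp
    (hf.fderiv_right (by norm_num))

lemma pdrv_pdrv_eq_fderiv_fderiv (hf : ContDiff ℝ 2 f) (i j : Fin d) :
    pdrv j (pdrv i f) q = fderiv ℝ (fderiv ℝ f) q (Pi.single j 1) (Pi.single i 1) := by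
  have hf' : DifferentiableAt ℝ (fderiv ℝ f) q :=
    (hf.fderiv_right (m := 1) (by norm_num)).differentiable (by norm_num) q
  have h := ((ContinuousLinearMap.apply ℝ ℝ (Pi.single i 1 : Fin d → ℝ)).hasFDerivAt.comp q
    hf'.hasFDerivAt).fderiv
  exact congrArg (· (Pi.single j 1)) h

lemma pdrv_pdrv_comm (hf : ContDiff ℝ 2 f) (i j : Fin d) :
    pdrv j (pdrv i f) q = pdrv i (pdrv j f) q := by
  rw [pdrv_pdrv_eq_fderiv_fderiv hf, pdrv_pdrv_eq_fderiv_fderiv hf]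
  exact hf.contDiffAt.isSymmSndFDerivAt (by norm_num) _ _

end PartialDerivative

section Hessian

variable {d : ℕ} {ξ : (Fin d → ℝ) → ℝ}

lemma hessM_mulVec_gradv_apply (hξ : ContDiff ℝ 2 ξ) (q : Fin d → ℝ) (i : Fin d) :
    (hessM ξ q *ᵥ gradv ξ q) i = pdrv i (fun x => ∑ k, gradv ξ x k ^ 2) q / 2 := by
  have hg : ∀ k, Differentiable ℝ (pdrv k ξ) := fun k =>
    (contDiff_pdrv hξ k).differentiable (by norm_num)
  simp only [mulVec, dotProduct, gradv, sq]
  rw [pdrv_sum (F := fun k x => pdrv k ξ x * pdrv k ξ x) Finset.univ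
    (fun k _ => (hg k).mul (hg k) q), Finset.sum_div]
  refine Finset.sum_congr rfl fun k _ => ?_
  rw [pdrv_mul (hg k q) (hg k q), hessM, of_apply, pdrv_pdrv_comm hξ]
  ring

lemma hessM_mulVec_gradv_eq_zero {c : ℝ} (hξ : ContDiff ℝ 2 ξ)
    (hc : ∀ x, ∑ k, gradv ξ x k ^ 2 = c) (q : Fin d → ℝ) : hessM ξ q *ᵥ gradv ξ q = 0 := by
  funext i
  rw [hessM_mulVec_gradv_apply hξ, funext hc, pdrv_const, zero_div, Pi.zero_apply]

lemma projP_eq_inv_smul_vecMulVec (q : Fin d → ℝ) :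
    projP ξ q = (∑ k, gradv ξ q k ^ 2)⁻¹ • vecMulVec (gradv ξ q) (gradv ξ q) := by
  ext i j
  simp [projP, vecMulVec_apply, div_eq_inv_mul]

end Hessian

section Divergence

variable {d : ℕ} {q : Fin d → ℝ}

lemma divMat_smul_one_add_smul_vecMulVec {ψ : (Fin d → ℝ) → ℝ} {g : (Fin d → ℝ) → Fin d → ℝ}
    (hψ : DifferentiableAt ℝ ψ q) (hg : ∀ k, DifferentiableAt ℝ (fun x => g x k) q)
    (κ : ℝ) (i : Fin d) :
    divMat (fun x => κ • (1 + ψ x • vecMulVec (g x) (g x))) q i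
      = κ * (g q i * ∑ j, pdrv j ψ q * g q j + ψ q * ∑ j, pdrv j (fun x => g x i) q * g q j
          + ψ q * g q i * ∑ j, pdrv j (fun x => g x j) q) := by
  simp only [divMat, Matrix.smul_apply, Matrix.add_apply, smul_eq_mul, vecMulVec_apply,
    Finset.mul_sum, ← Finset.sum_add_distrib]
  refine Finset.sum_congr rfl fun j _ => ?_
  rw [pdrv_const_mul, pdrv_const_add, pdrv_mul (g := fun x => g x i * g x j) hψ
    ((hg i).mul (hg j)), pdrv_mul (hg i) (hg j)]
  ring

end Divergence

theorem div_diffusion_constant_gradient_norm_general (d : ℕ) (ξ : (Fin d → ℝ) → ℝ)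
    (hξ : ContDiff ℝ 2 ξ) (hgrad : ∀ q, gradv ξ q ≠ 0)
    (hconst : ∃ c : ℝ, ∀ q, (∑ k, gradv ξ q k ^ 2) = c)
    (a : ℝ → ℝ) (ha : ContDiff ℝ 1 a) (κ : ℝ) (q : Fin d → ℝ) :
    hessM ξ q *ᵥ gradv ξ q = 0 ∧
    ∀ i, divMat
        (fun q' => κ • ((1 : Matrix (Fin d) (Fin d) ℝ) + (a (ξ q') - 1) • projP ξ q')) q i
      = κ * ((a (ξ q) - 1) * lapl ξ q / (∑ k, gradv ξ q k ^ 2) + deriv a (ξ q))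
          * gradv ξ q i := by
  obtain ⟨c, hc⟩ := hconst
  have hH := hessM_mulVec_gradv_eq_zero hξ hc q
  refine ⟨hH, fun i => ?_⟩
  have hc0 : c ≠ 0 := by
    simpa [← hc q, sq, ← dotProduct_self_eq_zero (v := gradv ξ q), dotProduct] using hgrad q
  have hg : ∀ k, Differentiable ℝ (fun x => gradv ξ x k) := fun k =>
    (contDiff_pdrv hξ k).differentiable (by norm_num)
  have ha' : Differentiable ℝ a := ha.differentiable (by norm_num)
  have hξ' : Differentiable ℝ ξ := hξ.differentiable (by norm_num)
  have hψ : Differentiable ℝ fun x => (a (ξ x) - 1) / c := by fun_prop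
  have hD : (fun x => κ • (1 + (a (ξ x) - 1) • projP ξ x))
      = fun x => κ • (1 + ((a (ξ x) - 1) / c) • vecMulVec (gradv ξ x) (gradv ξ x)) := by
    funext x
    rw [projP_eq_inv_smul_vecMulVec, hc x, smul_smul, div_eq_mul_inv]
  have hψ_pdrv : ∀ j, pdrv j (fun x => (a (ξ x) - 1) / c) q = deriv a (ξ q) * gradv ξ q j / c :=
    fun j => by rw [pdrv_div_const, pdrv_sub_const, pdrv_comp (ha' _) (hξ' q)]; rfl
  have hdrift : ∑ j, pdrv j (fun x => (a (ξ x) - 1) / c) q * gradv ξ q j = deriv a (ξ q) := by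
    simp only [hψ_pdrv, div_mul_eq_mul_div, mul_assoc, ← sq, ← Finset.sum_div, ← Finset.mul_sum,
      hc q, mul_div_cancel_right₀ _ hc0]
  have hhess : ∑ j, pdrv j (fun x => gradv ξ x i) q * gradv ξ q j = 0 := congrFun hH i
  have hlapl : ∑ j, pdrv j (fun x => gradv ξ x j) q = lapl ξ q := rfl
  rw [hD, divMat_smul_one_add_smul_vecMulVec (hψ q) (fun k => hg k q), hdrift, hhess, hlapl, hc q]
  field_simp
  ring

/-- If `‖∇ξ‖` is constant then `∇²ξ∇ξ = 0`, and the divergence of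
`D = κ(I + (a(ξ)−1)P)` simplifies to
`div D = κ((a(ξ)−1)Δξ/‖∇ξ‖² + a'(ξ))∇ξ`. -/
theorem div_diffusion_constant_gradient_norm (d : ℕ) (ξ : (Fin d → ℝ) → ℝ)
    (hξ : ContDiff ℝ 2 ξ) (hgrad : ∀ q, gradv ξ q ≠ 0)
    (hconst : ∃ c : ℝ, ∀ q, (∑ k, gradv ξ q k ^ 2) = c)
    (a : ℝ → ℝ) (ha : ContDiff ℝ 1 a) (κ : ℝ) (hκ : 0 < κ) (q : Fin d → ℝ) :
    hessM ξ q *ᵥ gradv ξ q = 0 ∧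
    ∀ i, divMat
        (fun q' => κ • ((1 : Matrix (Fin d) (Fin d) ℝ) + (a (ξ q') - 1) • projP ξ q')) q i
      = κ * ((a (ξ q) - 1) * lapl ξ q / (∑ k, gradv ξ q k ^ 2) + deriv a (ξ q))
          * gradv ξ q i :=
  div_diffusion_constant_gradient_norm_general d ξ hξ hgrad hconst a ha κ q
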